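/- arXiv:2303.04286 — 3 statements merged into one kernel-verified Lean document; each statement's English description precedes it below -/
import Mathlib

section
/- Let (Ω, F, P) be a probability space, X : Ω → Matrix (Fin d₁) (Fin d₂) ℝ a random matrix with square-integrable entries and E[X] = 0, Y : Ω → ℝ a random variable, A₁ and A₂ disjoint measurable subsets of ℝ, and Ỹ := 1{Y ∈ A₁} − 1{Y ∈ A₂}. For λ ≥ 0 define L(u, v, t) := Var(uᵀXv) + λ·E[(1 − Ỹ·(uᵀXv − t))₊]. Let U ∈ Matrix (Fin d₁) (Fin r₁) ℝ, V ∈ Matrix (Fin d₂) (Fin r₂) ℝ, and let m := σ(ω ↦ Uᵀ X(ω) V). Fix (u, v, t) ∈ ℝ^{d₁} × ℝ^{d₂} × ℝ, assume Y and X are conditionally independent given m, and assume there exist η_r ∈ ℝ^{r₁} and η_c ∈ ℝ^{r₂} such that E[uᵀXv | m] = (Uη_r)ᵀX(Vη_c) almost surely. Then L(u, v, t) ≥ L(Uη_r, Vη_c, t). -/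
/-!
Write `f = uᵀXv` and `m = σ(UᵀXV)`; the bilinearity assumption says that `(Uη_r)ᵀX(Vη_c)` is a
version of `E[f | m]`. Conditioning decreases the variance (law of total variance). For the hinge
term, split according to whether `Y ∈ A₁`, `Y ∈ A₂` or neither: it then suffices to show
`E[g(Y) ψ(E[f | m])] ≤ E[g(Y) ψ(f)]` for a bounded `g ≥ 0` and a convex `ψ`. With
`p = E[g(Y) | m] ≥ 0` the left side is `E[p ψ(E[f | m])]`, which by conditional Jensen is at most
`E[p ψ(f)]`, and conditional independence of `Y` and `X` given `m` turns this back into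
`E[g(Y) ψ(f)]` (first for bounded functions of `X`, then for integrable ones by truncation).
-/

open MeasureTheory ProbabilityTheory Matrix

noncomputable section

instance {m n : Type*} : MeasurableSpace (Matrix m n ℝ) :=
  inferInstanceAs (MeasurableSpace (m → n → ℝ))

/-- The bilinear form `uᵀ M v = Σ_{i,j} uᵢ M_{ij} vⱼ`. -/
def bilin {d₁ d₂ : ℕ} (u : Fin d₁ → ℝ) (M : Matrix (Fin d₁) (Fin d₂) ℝ) (v : Fin d₂ → ℝ) : ℝ :=
  ∑ i, ∑ j, u i * M i j * v j

/-- The sliced response `Ỹ = 1{Y ∈ A₁} − 1{Y ∈ A₂}`. -/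
def sliceLabel {Ω : Type*} (A₁ A₂ : Set ℝ) (Y : Ω → ℝ) (ω : Ω) : ℝ :=
  A₁.indicator 1 (Y ω) - A₂.indicator 1 (Y ω)

/-- The population PSMM objective
`L(u, v, t) = Var(uᵀXv) + λ·E[(1 − Ỹ(uᵀXv − t))₊]`. -/
def PSMMobj {Ω : Type*} [MeasurableSpace Ω] {d₁ d₂ : ℕ} (μ : Measure Ω)
    (X : Ω → Matrix (Fin d₁) (Fin d₂) ℝ) (Ytil : Ω → ℝ) (lam : ℝ)
    (u : Fin d₁ → ℝ) (v : Fin d₂ → ℝ) (t : ℝ) : ℝ :=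
  variance (fun ω => bilin u (X ω) v) μ
    + lam * ∫ ω, max (1 - Ytil ω * (bilin u (X ω) v - t)) 0 ∂μ

/-- Conditional independence of `Y` and `X` given a sub-σ-algebra `m`:
for all bounded measurable `g, h`, `E[g(Y)h(X) | m] = E[g(Y)|m] ⬝ E[h(X)|m]` a.s. -/
def CondIndepBdd {Ω α : Type*} [MeasurableSpace Ω] [MeasurableSpace α]
    (μ : Measure Ω) (m : MeasurableSpace Ω) (Y : Ω → ℝ) (X : Ω → α) : Prop :=
  ∀ (g : ℝ → ℝ) (h : α → ℝ), Measurable g → Measurable h →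
    (∃ C, ∀ x, |g x| ≤ C) → (∃ C, ∀ x, |h x| ≤ C) →
    μ[fun ω => g (Y ω) * h (X ω) | m]
      =ᵐ[μ] fun ω => (μ[fun ω' => g (Y ω') | m]) ω * (μ[fun ω' => h (X ω') | m]) ω

section

open Filter Topology

variable {Ω : Type*} {m m₀ : MeasurableSpace Ω} {μ : Measure[m₀] Ω}

theorem MeasureTheory.integral_mul_condExp_of_stronglyMeasurable (hm : m ≤ m₀)
    [SigmaFinite (μ.trim hm)] {q f : Ω → ℝ} (hq : StronglyMeasurable[m] q)
    (hqf : Integrable (q * f) μ) (hf : Integrable f μ) :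
    ∫ ω, q ω * (μ[f | m]) ω ∂μ = ∫ ω, q ω * f ω ∂μ :=
  calc ∫ ω, q ω * (μ[f | m]) ω ∂μ = ∫ ω, (μ[q * f | m]) ω ∂μ :=
        integral_congr_ae (condExp_mul_of_stronglyMeasurable_left hq hqf hf).symm
    _ = ∫ ω, q ω * f ω ∂μ := integral_condExp hm

theorem ProbabilityTheory.variance_condExp_le [IsProbabilityMeasure μ] (hm : m ≤ m₀) {X : Ω → ℝ}
    (hX : MemLp X 2 μ) : Var[μ[X | m]; μ] ≤ Var[X; μ] := by
  rw [← integral_condVar_add_variance_condExp hm hX]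
  have : 0 ≤ μ[Var[X; μ | m]] :=
    integral_nonneg_of_ae (condExp_nonneg (ae_of_all _ fun ω => sq_nonneg _))
  linarith

theorem ProbabilityTheory.tendsto_integral_mul_truncation [IsFiniteMeasure μ] {φ Z : Ω → ℝ}
    {C : ℝ} (hφ : AEStronglyMeasurable φ μ) (hφC : ∀ᵐ ω ∂μ, |φ ω| ≤ C) (hZ : Integrable Z μ) :
    Tendsto (fun n : ℕ => ∫ ω, φ ω * truncation Z n ω ∂μ) atTop (𝓝 (∫ ω, φ ω * Z ω ∂μ)) := by
  refine tendsto_integral_of_dominated_convergence (fun ω => C * |Z ω|)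
    (fun n => hφ.mul hZ.1.truncation) (hZ.abs.const_mul C) (fun n => ?_) (ae_of_all _ fun ω => ?_)
  · filter_upwards [hφC] with ω hω
    rw [Real.norm_eq_abs, abs_mul]
    exact mul_le_mul hω (abs_truncation_le_abs_self _ _ _) (abs_nonneg _) ((abs_nonneg _).trans hω)
  · refine tendsto_const_nhds.congr' ?_
    filter_upwards [tendsto_natCast_atTop_atTop.eventually_gt_atTop |Z ω|] with n hn
    rw [truncation_eq_self hn]

end

namespace CondIndepBdd

variable {Ω α : Type*} {m m₀ : MeasurableSpace Ω} [MeasurableSpace α] {μ : Measure[m₀] Ω}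
  [IsFiniteMeasure μ] {Y : Ω → ℝ} {X : Ω → α} {g : ℝ → ℝ} {C : ℝ}

theorem integral_comp_mul_comp_of_bdd (hCI : CondIndepBdd μ m Y X) (hm : m ≤ m₀)
    (hX : Measurable X) (hg : Measurable g) (hgC : ∀ y, |g y| ≤ C) {h : α → ℝ}
    (hh : Measurable h) {D : ℝ} (hhD : ∀ x, |h x| ≤ D) :
    ∫ ω, g (Y ω) * h (X ω) ∂μ = ∫ ω, (μ[fun ω' => g (Y ω') | m]) ω * h (X ω) ∂μ := by
  have hhX : Integrable (fun ω => h (X ω)) μ :=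
    .of_bound (hh.comp hX).aestronglyMeasurable D (ae_of_all _ fun ω => hhD _)
  calc ∫ ω, g (Y ω) * h (X ω) ∂μ = ∫ ω, (μ[fun ω => g (Y ω) * h (X ω) | m]) ω ∂μ :=
        (integral_condExp hm).symm
    _ = ∫ ω, (μ[fun ω' => g (Y ω') | m]) ω * (μ[fun ω' => h (X ω') | m]) ω ∂μ :=
        integral_congr_ae (hCI g h hg hh ⟨C, hgC⟩ ⟨D, hhD⟩)
    _ = _ := integral_mul_condExp_of_stronglyMeasurable hm stronglyMeasurable_condExp
        (integrable_condExp.mul_bdd (hh.comp hX).aestronglyMeasurable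
          (ae_of_all _ fun ω => hhD _)) hhX

theorem integral_comp_mul_comp (hCI : CondIndepBdd μ m Y X) (hm : m ≤ m₀)
    (hY : Measurable Y) (hX : Measurable X) (hg : Measurable g) (hgC : ∀ y, |g y| ≤ C)
    {H : α → ℝ} (hH : Measurable H) (hHX : Integrable (fun ω => H (X ω)) μ) :
    ∫ ω, g (Y ω) * H (X ω) ∂μ = ∫ ω, (μ[fun ω' => g (Y ω') | m]) ω * H (X ω) ∂μ := by
  have htrunc (n : ℕ) := hCI.integral_comp_mul_comp_of_bdd hm hX hg hgC
    ((measurable_id.indicator measurableSet_Ioc).comp hH) (abs_truncation_le_bound H n)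
  refine tendsto_nhds_unique (tendsto_integral_mul_truncation (hg.comp hY).aestronglyMeasurable
    (ae_of_all _ fun ω => hgC _) hHX) ?_
  refine (tendsto_integral_mul_truncation integrable_condExp.1
    (ae_bdd_abs_condExp_of_ae_bdd_abs (ae_of_all _ fun ω => hgC (Y ω))) hHX).congr fun n => ?_
  exact (htrunc n).symm

theorem integral_mul_map_condExp_le (hCI : CondIndepBdd μ m Y X) (hm : m ≤ m₀)
    (hY : Measurable Y) (hX : Measurable X) (hg : Measurable g) (hg0 : ∀ y, 0 ≤ g y)
    (hgC : ∀ y, g y ≤ C) {ψ : ℝ → ℝ} (hψ : ConvexOn ℝ Set.univ ψ) (hψc : Continuous ψ)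
    {F : α → ℝ} (hF : Measurable F) (hFX : Integrable (fun ω => F (X ω)) μ)
    (hψFX : Integrable (fun ω => ψ (F (X ω))) μ)
    (hψE : Integrable (fun ω => ψ ((μ[fun ω' => F (X ω') | m]) ω)) μ) :
    ∫ ω, g (Y ω) * ψ ((μ[fun ω' => F (X ω') | m]) ω) ∂μ ≤ ∫ ω, g (Y ω) * ψ (F (X ω)) ∂μ := by
  set f : Ω → ℝ := fun ω => F (X ω)
  set p := μ[fun ω => g (Y ω) | m]
  have hgY_norm : ∀ᵐ ω ∂μ, ‖g (Y ω)‖ ≤ C := ae_of_all _ fun ω => by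
    rw [Real.norm_eq_abs, abs_of_nonneg (hg0 _)]; exact hgC _
  have hgY : Integrable (fun ω => g (Y ω)) μ :=
    .of_bound (hg.comp hY).aestronglyMeasurable C hgY_norm
  have hp : ∀ᵐ ω ∂μ, p ω ∈ Set.Icc 0 C := (convex_Icc 0 C).condExp_mem hm hgY isClosed_Icc
    (ae_of_all _ fun ω => ⟨hg0 _, hgC _⟩)
  have hp_norm : ∀ᵐ ω ∂μ, ‖p ω‖ ≤ C := hp.mono fun ω h => by
    rw [Real.norm_eq_abs, abs_of_nonneg h.1]; exact h.2
  have jensen : ∀ᵐ ω ∂μ, ψ ((μ[f | m]) ω) ≤ (μ[fun ω => ψ (f ω) | m]) ω :=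
    hψ.map_condExp_le_univ hm hψc.lowerSemicontinuous hFX hψFX
  calc ∫ ω, g (Y ω) * ψ ((μ[f | m]) ω) ∂μ = ∫ ω, ψ ((μ[f | m]) ω) * g (Y ω) ∂μ := by
        simp_rw [mul_comm (g _)]
    _ = ∫ ω, ψ ((μ[f | m]) ω) * p ω ∂μ :=
        (integral_mul_condExp_of_stronglyMeasurable hm
          (hψc.comp_stronglyMeasurable stronglyMeasurable_condExp)
          (hψE.mul_bdd (hg.comp hY).aestronglyMeasurable hgY_norm) hgY).symm
    _ = ∫ ω, p ω * ψ ((μ[f | m]) ω) ∂μ := by simp_rw [mul_comm (ψ _)]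
    _ ≤ ∫ ω, p ω * (μ[fun ω => ψ (f ω) | m]) ω ∂μ := by
        refine integral_mono_ae (hψE.bdd_mul integrable_condExp.1 hp_norm)
          (integrable_condExp.bdd_mul integrable_condExp.1 hp_norm) ?_
        filter_upwards [hp, jensen] with ω hpω hJ
        exact mul_le_mul_of_nonneg_left hJ hpω.1
    _ = ∫ ω, p ω * ψ (f ω) ∂μ := integral_mul_condExp_of_stronglyMeasurable hm
        stronglyMeasurable_condExp (hψFX.bdd_mul integrable_condExp.1 hp_norm) hψFX
    _ = ∫ ω, g (Y ω) * ψ (f ω) ∂μ := (hCI.integral_comp_mul_comp hm hY hX hg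
        (fun y => (abs_of_nonneg (hg0 y)).trans_le (hgC y)) (hψc.measurable.comp hF) hψFX).symm

end CondIndepBdd

/-- The integrand of the hinge term of `PSMMobj` is, definitionally, `hingeLoss (Ỹ ω) t (uᵀXv)`. -/
def hingeLoss (c t x : ℝ) : ℝ := max (1 - c * (x - t)) 0

theorem convexOn_hingeLoss (c t : ℝ) : ConvexOn ℝ Set.univ (hingeLoss c t) := by
  have affine : ConvexOn ℝ Set.univ fun x => 1 - c * (x - t) :=
    ⟨convex_univ, fun x _ y _ a b _ _ hab => le_of_eq <| by
      simp only [smul_eq_mul]; linear_combination (-(1 + c * t)) * hab⟩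
  exact affine.sup (convexOn_const 0 convex_univ)

theorem continuous_hingeLoss (c t : ℝ) : Continuous (hingeLoss c t) := by
  unfold hingeLoss; fun_prop

theorem MeasureTheory.Integrable.hingeLoss {Ω : Type*} [MeasurableSpace Ω] {μ : Measure Ω}
    [IsFiniteMeasure μ] {z : Ω → ℝ} (hz : Integrable z μ) (c t : ℝ) :
    Integrable (fun ω => _root_.hingeLoss c t (z ω)) μ :=
  ((integrable_const 1).sub ((hz.sub (integrable_const t)).const_mul c)).pos_part

theorem hingeLoss_sliceLabel {Ω : Type*} {A₁ A₂ : Set ℝ} (hdisj : Disjoint A₁ A₂) (Y : Ω → ℝ)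
    (ω : Ω) (t x : ℝ) :
    hingeLoss (sliceLabel A₁ A₂ Y ω) t x =
      A₁.indicator 1 (Y ω) * hingeLoss 1 t x + A₂.indicator 1 (Y ω) * hingeLoss (-1) t x
        + (1 - A₁.indicator 1 (Y ω) - A₂.indicator 1 (Y ω)) := by
  by_cases h₁ : Y ω ∈ A₁
  · have h₂ : Y ω ∉ A₂ := hdisj.notMem_of_mem_left h₁
    simp [sliceLabel, h₁, h₂]
  · by_cases h₂ : Y ω ∈ A₂ <;> simp [sliceLabel, hingeLoss, h₁, h₂]

theorem norm_indicator_one_le (A : Set ℝ) (y : ℝ) : ‖A.indicator (1 : ℝ → ℝ) y‖ ≤ 1 :=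
  (norm_indicator_le_norm_self _ _).trans_eq norm_one

theorem integral_hingeLoss_sliceLabel_le {Ω : Type*} [MeasurableSpace Ω] {μ : Measure Ω}
    [IsFiniteMeasure μ] {Y : Ω → ℝ} (hY : Measurable Y) {A₁ A₂ : Set ℝ}
    (hA₁ : MeasurableSet A₁) (hA₂ : MeasurableSet A₂) (hdisj : Disjoint A₁ A₂) (t : ℝ)
    {z₁ z₂ : Ω → ℝ} (hz₁ : Integrable z₁ μ) (hz₂ : Integrable z₂ μ)
    (h₁ : ∫ ω, A₁.indicator 1 (Y ω) * hingeLoss 1 t (z₁ ω) ∂μ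
      ≤ ∫ ω, A₁.indicator 1 (Y ω) * hingeLoss 1 t (z₂ ω) ∂μ)
    (h₂ : ∫ ω, A₂.indicator 1 (Y ω) * hingeLoss (-1) t (z₁ ω) ∂μ
      ≤ ∫ ω, A₂.indicator 1 (Y ω) * hingeLoss (-1) t (z₂ ω) ∂μ) :
    ∫ ω, hingeLoss (sliceLabel A₁ A₂ Y ω) t (z₁ ω) ∂μ
      ≤ ∫ ω, hingeLoss (sliceLabel A₁ A₂ Y ω) t (z₂ ω) ∂μ := by
  have hind {A : Set ℝ} (hA : MeasurableSet A) :
      Integrable (fun ω => A.indicator (1 : ℝ → ℝ) (Y ω)) μ :=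
    .of_bound ((measurable_one.indicator hA).comp hY).aestronglyMeasurable 1
      (ae_of_all _ fun ω => norm_indicator_one_le A _)
  have hsplit {z : Ω → ℝ} (hz : Integrable z μ) :
      ∫ ω, hingeLoss (sliceLabel A₁ A₂ Y ω) t (z ω) ∂μ
        = ∫ ω, A₁.indicator 1 (Y ω) * hingeLoss 1 t (z ω) ∂μ
          + ∫ ω, A₂.indicator 1 (Y ω) * hingeLoss (-1) t (z ω) ∂μ
          + ∫ ω, (1 - A₁.indicator 1 (Y ω) - A₂.indicator 1 (Y ω)) ∂μ := by
    have hpiece {A : Set ℝ} (hA : MeasurableSet A) (c : ℝ) :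
        Integrable (fun ω => A.indicator 1 (Y ω) * hingeLoss c t (z ω)) μ :=
      (hz.hingeLoss c t).bdd_mul (hind hA).1 (ae_of_all _ fun ω => norm_indicator_one_le A _)
    have h₁₂ : Integrable (fun ω => A₁.indicator 1 (Y ω) * hingeLoss 1 t (z ω)
        + A₂.indicator 1 (Y ω) * hingeLoss (-1) t (z ω)) μ := (hpiece hA₁ 1).add (hpiece hA₂ (-1))
    have hrest : Integrable (fun ω => (1 : ℝ) - A₁.indicator 1 (Y ω) - A₂.indicator 1 (Y ω)) μ :=
      ((integrable_const 1).sub (hind hA₁)).sub (hind hA₂)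
    simp_rw [hingeLoss_sliceLabel hdisj]
    rw [integral_add h₁₂ hrest, integral_add (hpiece hA₁ 1) (hpiece hA₂ (-1))]
  rw [hsplit hz₁, hsplit hz₂]
  linarith

theorem measurable_bilin {d₁ d₂ : ℕ} (u : Fin d₁ → ℝ) (v : Fin d₂ → ℝ) :
    Measurable fun M : Matrix (Fin d₁) (Fin d₂) ℝ => bilin u M v := by
  unfold bilin; fun_prop

theorem memLp_bilin {Ω : Type*} [MeasurableSpace Ω] {μ : Measure Ω} {d₁ d₂ : ℕ}
    {X : Ω → Matrix (Fin d₁) (Fin d₂) ℝ} (hX : ∀ i j, MemLp (fun ω => X ω i j) 2 μ)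
    (u : Fin d₁ → ℝ) (v : Fin d₂ → ℝ) : MemLp (fun ω => bilin u (X ω) v) 2 μ := by
  unfold bilin
  refine memLp_finsetSum (f := fun i ω => ∑ j, u i * X ω i j * v j) _ fun i _ =>
    memLp_finsetSum (f := fun j ω => u i * X ω i j * v j) _ fun j _ => ?_
  simpa [mul_comm, mul_left_comm] using (hX i j).const_mul (u i * v j)

theorem measurable_matrix_mul_mul {Ω ι κ ι' κ' : Type*} [MeasurableSpace Ω] [Fintype κ]
    [Fintype ι'] {X : Ω → Matrix κ ι' ℝ} (hX : Measurable X) (A : Matrix ι κ ℝ)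
    (B : Matrix ι' κ' ℝ) : Measurable fun ω => A * X ω * B := by
  have hX_entry (i : κ) (j : ι') : Measurable fun ω => X ω i j :=
    (measurable_pi_apply j).comp ((measurable_pi_apply i).comp hX)
  refine measurable_pi_iff.2 fun i => measurable_pi_iff.2 fun l => ?_
  simp only [Matrix.mul_apply, Finset.sum_mul]
  fun_prop

theorem stmt_6_general {Ω : Type*} [MeasurableSpace Ω] {μ : Measure Ω} [IsProbabilityMeasure μ]
    {d₁ d₂ r₁ r₂ : ℕ}
    (X : Ω → Matrix (Fin d₁) (Fin d₂) ℝ) (hX : Measurable X)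
    (hXL2 : ∀ i j, MemLp (fun ω => X ω i j) 2 μ)
    (Y : Ω → ℝ) (hY : Measurable Y)
    (A₁ A₂ : Set ℝ) (hA₁ : MeasurableSet A₁) (hA₂ : MeasurableSet A₂)
    (hdisj : Disjoint A₁ A₂)
    (lam : ℝ) (hlam : 0 ≤ lam)
    (U : Matrix (Fin d₁) (Fin r₁) ℝ) (V : Matrix (Fin d₂) (Fin r₂) ℝ)
    (u : Fin d₁ → ℝ) (v : Fin d₂ → ℝ) (t : ℝ)
    (ηr : Fin r₁ → ℝ) (ηc : Fin r₂ → ℝ)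
    (hCI : CondIndepBdd μ
      (MeasurableSpace.comap (fun ω => Uᵀ * X ω * V) inferInstance) Y X)
    (hbilin : μ[fun ω => bilin u (X ω) v |
        MeasurableSpace.comap (fun ω => Uᵀ * X ω * V) inferInstance]
      =ᵐ[μ] fun ω => bilin (U.mulVec ηr) (X ω) (V.mulVec ηc)) :
    PSMMobj μ X (sliceLabel A₁ A₂ Y) lam (U.mulVec ηr) (V.mulVec ηc) t
      ≤ PSMMobj μ X (sliceLabel A₁ A₂ Y) lam u v t := by
  have hm : MeasurableSpace.comap (fun ω => Uᵀ * X ω * V) inferInstance ≤ ‹MeasurableSpace Ω› :=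
    (measurable_matrix_mul_mul hX Uᵀ V).comap_le
  have hvar : variance (fun ω => bilin (U.mulVec ηr) (X ω) (V.mulVec ηc)) μ
      ≤ variance (fun ω => bilin u (X ω) v) μ :=
    (variance_congr hbilin).symm.trans_le (variance_condExp_le hm (memLp_bilin hXL2 u v))
  have hslice {A : Set ℝ} (hA : MeasurableSet A) (c : ℝ) :
      ∫ ω, A.indicator 1 (Y ω) * hingeLoss c t (bilin (U.mulVec ηr) (X ω) (V.mulVec ηc)) ∂μ
        ≤ ∫ ω, A.indicator 1 (Y ω) * hingeLoss c t (bilin u (X ω) v) ∂μ := by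
    have hf := (memLp_bilin hXL2 u v).integrable one_le_two
    refine (integral_congr_ae ?_).trans_le (hCI.integral_mul_map_condExp_le hm hY hX
      (measurable_one.indicator hA) (fun _ => Set.indicator_nonneg (fun _ _ => zero_le_one) _)
      (fun _ => Set.indicator_le_self' (fun _ _ => zero_le_one) _)
      (convexOn_hingeLoss c t) (continuous_hingeLoss c t) (measurable_bilin u v) hf
      (hf.hingeLoss c t) (integrable_condExp.hingeLoss c t))
    filter_upwards [hbilin] with ω hω
    rw [hω]
  refine add_le_add hvar (mul_le_mul_of_nonneg_left ?_ hlam)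
  exact integral_hingeLoss_sliceLabel_le hY hA₁ hA₂ hdisj t
    ((memLp_bilin hXL2 _ _).integrable one_le_two) ((memLp_bilin hXL2 u v).integrable one_le_two)
    (hslice hA₁ 1) (hslice hA₂ (-1))

/-- **Key inequality in Theorem 1.** If `Y ⫫ X | σ(UᵀXV)` and
`E[uᵀXv | σ(UᵀXV)] = (Uη_r)ᵀX(Vη_c)` a.s., then `L(u,v,t) ≥ L(Uη_r, Vη_c, t)`. -/
theorem stmt_6 {Ω : Type*} [MeasurableSpace Ω] {μ : Measure Ω} [IsProbabilityMeasure μ]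
    {d₁ d₂ r₁ r₂ : ℕ}
    (X : Ω → Matrix (Fin d₁) (Fin d₂) ℝ) (hX : Measurable X)
    (hXL2 : ∀ i j, MemLp (fun ω => X ω i j) 2 μ)
    (hXmean : ∀ i j, ∫ ω, X ω i j ∂μ = 0)
    (Y : Ω → ℝ) (hY : Measurable Y)
    (A₁ A₂ : Set ℝ) (hA₁ : MeasurableSet A₁) (hA₂ : MeasurableSet A₂)
    (hdisj : Disjoint A₁ A₂)
    (lam : ℝ) (hlam : 0 ≤ lam)
    (U : Matrix (Fin d₁) (Fin r₁) ℝ) (V : Matrix (Fin d₂) (Fin r₂) ℝ)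
    (u : Fin d₁ → ℝ) (v : Fin d₂ → ℝ) (t : ℝ)
    (ηr : Fin r₁ → ℝ) (ηc : Fin r₂ → ℝ)
    (hCI : CondIndepBdd μ
      (MeasurableSpace.comap (fun ω => Uᵀ * X ω * V) inferInstance) Y X)
    (hbilin : μ[fun ω => bilin u (X ω) v |
        MeasurableSpace.comap (fun ω => Uᵀ * X ω * V) inferInstance]
      =ᵐ[μ] fun ω => bilin (U.mulVec ηr) (X ω) (V.mulVec ηc)) :
    PSMMobj μ X (sliceLabel A₁ A₂ Y) lam (U.mulVec ηr) (V.mulVec ηc) t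
      ≤ PSMMobj μ X (sliceLabel A₁ A₂ Y) lam u v t :=
  stmt_6_general X hX hXL2 Y hY A₁ A₂ hA₁ hA₂ hdisj lam hlam U V u v t ηr ηc hCI hbilin
end
end

section
/- Let Σ_r ∈ Matrix (Fin d₁) (Fin d₁) ℝ, Σ_c ∈ Matrix (Fin d₂) (Fin d₂) ℝ be symmetric positive definite, X₁, …, X_n ∈ Matrix (Fin d₁) (Fin d₂) ℝ with mean X̄, labels Ỹ₁, …, Ỹ_n ∈ {−1, 1}, λ > 0, and fix v ∈ ℝ^{d₂} with v ≠ 0. Suppose (u*, t*) minimizes over (u, t) ∈ ℝ^{d₁} × ℝ the function (uᵀΣ_r u)(vᵀΣ_c v) + (λ/n)·Σᵢ (1 − Ỹᵢ(uᵀ(Xᵢ − X̄)v − t))₊. Then there exist α₁, …, α_n ∈ ℝ with 0 ≤ αᵢ ≤ λ/n for all i and Σᵢ αᵢỸᵢ = 0, such that u* = (1/2)·Σᵢ (αᵢỸᵢ)·Σ_r⁻¹(Xᵢ − X̄)v / (vᵀΣ_c v), and (α₁, …, α_n) minimizes the dual objective −Σᵢ αᵢ + (1/4)·Σᵢ Σⱼ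 αᵢαⱼỸᵢỸⱼ·((Xᵢ − X̄)v)ᵀΣ_r⁻¹((Xⱼ − X̄)v)/(vᵀΣ_c v) over all α satisfying these constraints. -/
/-!
At a minimizer `(u*, t*)` of the convex primal objective `P`, moving in any direction cannot
decrease `P` to first order; since the one-sided derivative of a hinge term is the support function
of its subdifferential, Hahn–Banach separation turns this into multipliers `αᵢ` in those
subdifferentials with `Σ αᵢỸᵢ(Xᵢ − X̄)v = 2(vᵀΣ_c v) Σ_r u*` and `Σ αᵢỸᵢ = 0` (the KKT conditions).
Completing the square in `u` gives weak duality `−D(β) ≤ P(u, t)` for every dual-feasible `β`, and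
complementary slackness makes it an equality `D(α) = −P(u*, t*)` at `α`, so `α` minimizes `D`.
-/

open Matrix

noncomputable section

/-- Sample mean of data matrices. -/
def sampleMean {n d₁ d₂ : ℕ} (X : Fin n → Matrix (Fin d₁) (Fin d₂) ℝ) :
    Matrix (Fin d₁) (Fin d₂) ℝ :=
  (n : ℝ)⁻¹ • ∑ i, X i

/-- The dual objective of the `u`-update quadratic program:
`D(α) = −Σᵢ αᵢ + (1/4) Σᵢ Σⱼ αᵢαⱼỸᵢỸⱼ ((Xᵢ−X̄)v)ᵀΣ_r⁻¹((Xⱼ−X̄)v) / (vᵀΣ_c v)`. -/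
def dualObjU {n d₁ d₂ : ℕ} (Sr : Matrix (Fin d₁) (Fin d₁) ℝ)
    (Sc : Matrix (Fin d₂) (Fin d₂) ℝ) (X : Fin n → Matrix (Fin d₁) (Fin d₂) ℝ)
    (Ytil : Fin n → ℝ) (v : Fin d₂ → ℝ) (α : Fin n → ℝ) : ℝ :=
  -∑ i, α i + (1 / 4) * ∑ i, ∑ j, α i * α j * Ytil i * Ytil j *
    (((X i - sampleMean X).mulVec v) ⬝ᵥ (Sr⁻¹.mulVec ((X j - sampleMean X).mulVec v)))
      / bilin v Sc v

open Filter Topology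

lemma mem_of_forall_exists_le {E : Type*} [TopologicalSpace E] [AddCommGroup E]
    [IsTopologicalAddGroup E] [Module ℝ E] [ContinuousSMul ℝ E] [LocallyConvexSpace ℝ E]
    {C : Set E} (hconv : Convex ℝ C) (hclosed : IsClosed C) {p : E}
    (h : ∀ f : StrongDual ℝ E, ∃ c ∈ C, f p ≤ f c) : p ∈ C := by
  by_contra hp
  obtain ⟨f, r, hlt, hgt⟩ := geometric_hahn_banach_closed_point hconv hclosed hp
  obtain ⟨c, hc, hle⟩ := h f
  linarith [hlt c hc]

lemma exists_dotProduct_add_mul_eq {m : Type*} [Fintype m] [DecidableEq m]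
    (f : ((m → ℝ) × ℝ) →ₗ[ℝ] ℝ) : ∃ (h : m → ℝ) (τ : ℝ), ∀ x r, f (x, r) = x ⬝ᵥ h + r * τ := by
  refine ⟨fun j => f (fun k => if j = k then 1 else 0, 0), f (0, 1), fun x r => ?_⟩
  have hsplit : f (x, r) = f (x, 0) + r • f (0, 1) := by
    rw [← map_smul, ← map_add, Prod.smul_mk, smul_zero, Prod.mk_add_mk, add_zero, smul_eq_mul,
      mul_one, zero_add]
  rw [hsplit, ← LinearMap.inl_apply (R := ℝ) (M₂ := ℝ), ← LinearMap.comp_apply,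
    LinearMap.pi_apply_eq_sum_univ, smul_eq_mul]
  rfl

lemma tendsto_add_mul_nhdsGT_zero (a b : ℝ) :
    Tendsto (fun ε => a + ε * b) (𝓝[>] 0) (𝓝 a) := by
  have : Continuous fun ε : ℝ => a + ε * b := by fun_prop
  simpa using (this.tendsto 0).mono_left nhdsWithin_le_nhds

lemma nonneg_of_eventually_nonneg_mul_add_sq {D C : ℝ}
    (h : ∀ᶠ ε in 𝓝[>] (0 : ℝ), 0 ≤ ε * D + ε ^ 2 * C) : 0 ≤ D := by
  refine ge_of_tendsto (tendsto_add_mul_nhdsGT_zero D C) ?_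
  filter_upwards [h, self_mem_nhdsWithin] with ε hε (hpos : 0 < ε)
  refine (mul_nonneg_iff_of_pos_left hpos).1 ?_
  linarith

section quadratic

variable {m : Type*} [Fintype m] {S : Matrix m m ℝ}

lemma Matrix.IsSymm.dotProduct_mulVec_comm (hS : S.IsSymm) (u w : m → ℝ) :
    u ⬝ᵥ S *ᵥ w = w ⬝ᵥ S *ᵥ u := by
  rw [dotProduct_mulVec, ← mulVec_transpose, hS.eq, dotProduct_comm]

lemma add_smul_dotProduct_mulVec (hS : S.IsSymm) (u h : m → ℝ) (ε : ℝ) :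
    (u + ε • h) ⬝ᵥ S *ᵥ (u + ε • h) =
      u ⬝ᵥ S *ᵥ u + ε * (2 * (h ⬝ᵥ S *ᵥ u)) + ε ^ 2 * (h ⬝ᵥ S *ᵥ h) := by
  simp only [mulVec_add, mulVec_smul, add_dotProduct, dotProduct_add, smul_dotProduct,
    dotProduct_smul, smul_eq_mul, hS.dotProduct_mulVec_comm u h]
  ring

lemma neg_div_le_mul_dotProduct_mulVec_sub [DecidableEq m] (hS : S.PosDef) {c : ℝ} (hc : 0 < c)
    (u w : m → ℝ) : -(w ⬝ᵥ S⁻¹ *ᵥ w) / (4 * c) ≤ c * (u ⬝ᵥ S *ᵥ u) - u ⬝ᵥ w := by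
  have hunit : IsUnit S.det := (isUnit_iff_isUnit_det S).1 hS.isUnit
  set r := (2 * c) • S *ᵥ u - w
  have hr : 0 ≤ r ⬝ᵥ S⁻¹ *ᵥ r := by simpa using hS.inv.posSemidef.dotProduct_mulVec_nonneg r
  have hcross : S *ᵥ u ⬝ᵥ S⁻¹ *ᵥ w = u ⬝ᵥ w := by
    rw [dotProduct_comm, ← (isHermitian_iff_isSymm.1 hS.isHermitian).dotProduct_mulVec_comm,
      mulVec_mulVec, mul_nonsing_inv S hunit, one_mulVec, dotProduct_comm]
  have hexpand : r ⬝ᵥ S⁻¹ *ᵥ r =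
      4 * c ^ 2 * (u ⬝ᵥ S *ᵥ u) - 4 * c * (u ⬝ᵥ w) + w ⬝ᵥ S⁻¹ *ᵥ w := by
    simp only [r, mulVec_sub, mulVec_smul, mulVec_mulVec, nonsing_inv_mul S hunit, one_mulVec,
      sub_dotProduct, dotProduct_sub, smul_dotProduct, dotProduct_smul, smul_eq_mul, hcross,
      dotProduct_comm w u, dotProduct_comm (S *ᵥ u) u]
    ring
  rw [div_le_iff₀ (by positivity)]
  nlinarith

end quadratic

/-- The subdifferential of `x ↦ κ * max x 0` at `s`. -/
def hingeSubdiff (κ s : ℝ) : Set ℝ :=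
  Set.Icc (if 0 < s then κ else 0) (if s < 0 then 0 else κ)

section hinge

variable {κ s α : ℝ}

lemma mem_Icc_of_mem_hingeSubdiff (hκ : 0 ≤ κ) (hα : α ∈ hingeSubdiff κ s) : α ∈ Set.Icc 0 κ :=
  ⟨le_trans (by split_ifs <;> simp [hκ]) hα.1, hα.2.trans (by split_ifs <;> simp [hκ])⟩

lemma mul_eq_of_mem_hingeSubdiff (hα : α ∈ hingeSubdiff κ s) : α * s = κ * max s 0 := by
  obtain ⟨h₁, h₂⟩ := hα
  rcases lt_trichotomy s 0 with hs | rfl | hs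
  · simp only [hs, if_true, if_neg hs.not_gt] at h₁ h₂
    rw [le_antisymm h₂ h₁, max_eq_right hs.le]
    ring
  · simp
  · simp only [hs, if_true, if_neg hs.not_gt] at h₁ h₂
    rw [le_antisymm h₂ h₁, max_eq_left hs.le]

lemma exists_mem_hingeSubdiff_eventually_eq (hκ : 0 ≤ κ) (s δ : ℝ) :
    ∃ α ∈ hingeSubdiff κ s,
      ∀ᶠ ε in 𝓝[>] (0 : ℝ), κ * max (s + ε * δ) 0 = κ * max s 0 + ε * (α * δ) := by
  rcases lt_trichotomy s 0 with hs | rfl | hs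
  · refine ⟨0, by simp [hingeSubdiff, hs, hs.not_gt], ?_⟩
    filter_upwards [(tendsto_add_mul_nhdsGT_zero s δ).eventually (gt_mem_nhds hs)] with ε hε
    rw [max_eq_right hε.le, max_eq_right hs.le]
    ring
  · refine ⟨if 0 < δ then κ else 0, by split_ifs <;> simp [hingeSubdiff, hκ], ?_⟩
    filter_upwards [self_mem_nhdsWithin] with ε (hε : 0 < ε)
    split_ifs with hδ
    · rw [zero_add, max_eq_left (by positivity), max_self]
      ring
    · rw [zero_add, max_eq_right (by nlinarith), max_self]
      ring
  · refine ⟨κ, by simp [hingeSubdiff, hs, hs.not_gt], ?_⟩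
    filter_upwards [(tendsto_add_mul_nhdsGT_zero s δ).eventually (lt_mem_nhds hs)] with ε hε
    rw [max_eq_left hε.le, max_eq_left hs.le]
    ring

end hinge

section svm

variable {ι m : Type*} [Fintype ι] [Fintype m]
  (S : Matrix m m ℝ) (c κ : ℝ) (A : ι → m → ℝ) (Y : ι → ℝ)

def svmPrimal (u : m → ℝ) (t : ℝ) : ℝ :=
  c * (u ⬝ᵥ S *ᵥ u) + κ * ∑ i, max (1 - Y i * (u ⬝ᵥ A i - t)) 0

def dualCombination (β : ι → ℝ) : m → ℝ :=
  ∑ i, (β i * Y i) • A i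

def svmDual [DecidableEq m] (β : ι → ℝ) : ℝ :=
  -∑ i, β i + dualCombination A Y β ⬝ᵥ S⁻¹ *ᵥ dualCombination A Y β / (4 * c)

variable {S c κ A Y}

lemma sum_mul_margin (β : ι → ℝ) (u : m → ℝ) (t : ℝ) :
    ∑ i, β i * (Y i * (u ⬝ᵥ A i - t)) = u ⬝ᵥ dualCombination A Y β - t * ∑ i, β i * Y i := by
  simp only [dualCombination, dotProduct_sum, dotProduct_smul, smul_eq_mul, Finset.mul_sum,
    ← Finset.sum_sub_distrib]
  exact Finset.sum_congr rfl fun i _ => by ring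

lemma sum_mul_one_sub_margin (β : ι → ℝ) (u : m → ℝ) (t : ℝ) :
    ∑ i, β i * (1 - Y i * (u ⬝ᵥ A i - t)) =
      ∑ i, β i - (u ⬝ᵥ dualCombination A Y β - t * ∑ i, β i * Y i) := by
  rw [← sum_mul_margin, ← Finset.sum_sub_distrib]
  exact Finset.sum_congr rfl fun i _ => by ring

lemma mulVec_dualCombination (M : Matrix m m ℝ) (β : ι → ℝ) :
    M *ᵥ dualCombination A Y β = ∑ i, (β i * Y i) • M *ᵥ A i := by
  simp only [dualCombination, mulVec_sum, mulVec_smul]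

lemma dualCombination_dotProduct_mulVec (M : Matrix m m ℝ) (β : ι → ℝ) :
    dualCombination A Y β ⬝ᵥ M *ᵥ dualCombination A Y β =
      ∑ i, ∑ j, β i * β j * Y i * Y j * (A i ⬝ᵥ M *ᵥ A j) := by
  rw [mulVec_dualCombination, dualCombination, sum_dotProduct]
  refine Finset.sum_congr rfl fun i _ => ?_
  simp only [smul_dotProduct, dotProduct_sum, dotProduct_smul, smul_eq_mul]
  exact Finset.sum_congr rfl fun j _ => by ring

variable {u₀ : m → ℝ} {t₀ : ℝ}

-- first-order optimality of `(u₀, t₀)` in the direction `-(h, τ)`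
lemma exists_mem_hingeSubdiff_le (hS : S.IsSymm) (hκ : 0 ≤ κ)
    (hmin : ∀ u t, svmPrimal S c κ A Y u₀ t₀ ≤ svmPrimal S c κ A Y u t) (h : m → ℝ) (τ : ℝ) :
    ∃ α : ι → ℝ, (∀ i, α i ∈ hingeSubdiff κ (1 - Y i * (u₀ ⬝ᵥ A i - t₀))) ∧
      2 * c * (h ⬝ᵥ S *ᵥ u₀) ≤ ∑ i, α i * (Y i * (h ⬝ᵥ A i - τ)) := by
  choose α hα hev using fun i =>
    exists_mem_hingeSubdiff_eventually_eq hκ (1 - Y i * (u₀ ⬝ᵥ A i - t₀)) (Y i * (h ⬝ᵥ A i - τ))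
  refine ⟨α, hα, ?_⟩
  suffices 0 ≤ -(2 * c * (h ⬝ᵥ S *ᵥ u₀)) + ∑ i, α i * (Y i * (h ⬝ᵥ A i - τ)) by linarith
  refine nonneg_of_eventually_nonneg_mul_add_sq (C := c * (h ⬝ᵥ S *ᵥ h)) ?_
  filter_upwards [eventually_all.2 hev] with ε hε
  have hmargin : ∀ i, 1 - Y i * ((u₀ + ε • -h) ⬝ᵥ A i - (t₀ + ε * -τ)) =
      1 - Y i * (u₀ ⬝ᵥ A i - t₀) + ε * (Y i * (h ⬝ᵥ A i - τ)) := fun i => by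
    simp only [add_dotProduct, smul_dotProduct, neg_dotProduct, smul_eq_mul]
    ring
  have hstep := hmin (u₀ + ε • -h) (t₀ + ε * -τ)
  simp only [svmPrimal, add_smul_dotProduct_mulVec hS, hmargin, Finset.mul_sum, hε,
    Finset.sum_add_distrib, neg_dotProduct, mulVec_neg, dotProduct_neg, neg_neg] at hstep
  rw [← Finset.mul_sum, ← Finset.mul_sum] at hstep
  linear_combination hstep

theorem exists_svm_kkt [DecidableEq m] (hS : S.IsSymm) (hκ : 0 ≤ κ)
    (hmin : ∀ u t, svmPrimal S c κ A Y u₀ t₀ ≤ svmPrimal S c κ A Y u t) :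
    ∃ α : ι → ℝ, (∀ i, α i ∈ hingeSubdiff κ (1 - Y i * (u₀ ⬝ᵥ A i - t₀))) ∧
      ∑ i, α i * Y i = 0 ∧ dualCombination A Y α = (2 * c) • S *ᵥ u₀ := by
  set K : Set (ι → ℝ) := Set.univ.pi fun i => hingeSubdiff κ (1 - Y i * (u₀ ⬝ᵥ A i - t₀))
  set L : (ι → ℝ) →ₗ[ℝ] (m → ℝ) × ℝ := Fintype.linearCombination ℝ fun i => (Y i • A i, -Y i)
  have hL : ∀ α, L α = (dualCombination A Y α, -∑ i, α i * Y i) := fun α => by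
    ext <;> simp [L, Fintype.linearCombination_apply, dualCombination, Prod.fst_sum, Prod.snd_sum,
      smul_smul]
  have hK : IsCompact K := isCompact_univ_pi fun i => isCompact_Icc
  -- a functional separating the gradient `(2c S u₀, 0)` from `L '' K` would be a descent direction
  have hmem : ((2 * c) • S *ᵥ u₀, 0) ∈ L '' K := by
    refine mem_of_forall_exists_le ((convex_pi fun i _ => convex_Icc _ _).linear_image L)
      (hK.image L.continuous_of_finiteDimensional).isClosed fun f => ?_
    obtain ⟨h, τ, hf⟩ := exists_dotProduct_add_mul_eq f.toLinearMap
    obtain ⟨α, hα, hle⟩ := exists_mem_hingeSubdiff_le hS hκ hmin h τ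
    refine ⟨L α, ⟨α, fun i _ => hα i, rfl⟩, ?_⟩
    have hfα := hf (dualCombination A Y α) (-∑ i, α i * Y i)
    have hfu := hf ((2 * c) • S *ᵥ u₀) 0
    simp only [ContinuousLinearMap.coe_coe] at hfα hfu
    rw [hL, hfα, hfu, smul_dotProduct, smul_eq_mul, dotProduct_comm (S *ᵥ u₀),
      dotProduct_comm (dualCombination A Y α)]
    linarith [sum_mul_margin (A := A) (Y := Y) α h τ]
  obtain ⟨α, hα, hLα⟩ := hmem
  rw [hL, Prod.mk.injEq, neg_eq_zero] at hLα
  exact ⟨α, fun i => hα i (Set.mem_univ i), hLα.2, hLα.1⟩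

theorem neg_svmDual_le_svmPrimal [DecidableEq m] (hS : S.PosDef) (hc : 0 < c) {β : ι → ℝ}
    (hβ : ∀ i, 0 ≤ β i ∧ β i ≤ κ) (hbal : ∑ i, β i * Y i = 0) (u : m → ℝ) (t : ℝ) :
    -svmDual S c A Y β ≤ svmPrimal S c κ A Y u t := by
  have hhinge : ∑ i, β i * (1 - Y i * (u ⬝ᵥ A i - t)) ≤
      κ * ∑ i, max (1 - Y i * (u ⬝ᵥ A i - t)) 0 := by
    rw [Finset.mul_sum]
    refine Finset.sum_le_sum fun i _ => ?_
    nlinarith [hβ i, le_max_left (1 - Y i * (u ⬝ᵥ A i - t)) 0,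
      le_max_right (1 - Y i * (u ⬝ᵥ A i - t)) 0]
  rw [sum_mul_one_sub_margin, hbal, mul_zero, sub_zero] at hhinge
  have hquad := neg_div_le_mul_dotProduct_mulVec_sub hS hc u (dualCombination A Y β)
  rw [svmDual, svmPrimal, neg_add, neg_neg, ← neg_div]
  linarith

theorem svmDual_eq_neg_svmPrimal [DecidableEq m] (hS : IsUnit S.det) (hc : c ≠ 0) {α : ι → ℝ}
    {u : m → ℝ} {t : ℝ} (hα : ∀ i, α i ∈ hingeSubdiff κ (1 - Y i * (u ⬝ᵥ A i - t)))
    (hbal : ∑ i, α i * Y i = 0) (hgrad : dualCombination A Y α = (2 * c) • S *ᵥ u) :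
    svmDual S c A Y α = -svmPrimal S c κ A Y u t := by
  have hslack : ∑ i, α i * (1 - Y i * (u ⬝ᵥ A i - t)) =
      κ * ∑ i, max (1 - Y i * (u ⬝ᵥ A i - t)) 0 := by
    rw [Finset.mul_sum]
    exact Finset.sum_congr rfl fun i _ => mul_eq_of_mem_hingeSubdiff (hα i)
  rw [sum_mul_one_sub_margin, hbal, mul_zero, sub_zero, hgrad, dotProduct_smul,
    smul_eq_mul] at hslack
  have hquad : dualCombination A Y α ⬝ᵥ S⁻¹ *ᵥ dualCombination A Y α =
      (2 * c) ^ 2 * (u ⬝ᵥ S *ᵥ u) := by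
    rw [hgrad, mulVec_smul, mulVec_mulVec, nonsing_inv_mul S hS, one_mulVec, smul_dotProduct,
      dotProduct_smul, smul_eq_mul, smul_eq_mul, dotProduct_comm]
    ring
  have hc' : (2 * c) ^ 2 * (u ⬝ᵥ S *ᵥ u) / (4 * c) = c * (u ⬝ᵥ S *ᵥ u) := by
    field_simp
    ring
  rw [svmDual, svmPrimal, hquad, hc']
  linarith

end svm

lemma bilin_eq_dotProduct {d₁ d₂ : ℕ} (u : Fin d₁ → ℝ) (M : Matrix (Fin d₁) (Fin d₂) ℝ)
    (v : Fin d₂ → ℝ) : bilin u M v = u ⬝ᵥ M *ᵥ v := by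
  simp only [bilin, dotProduct, mulVec, Finset.mul_sum, mul_assoc]

lemma dualObjU_eq_svmDual {n d₁ d₂ : ℕ} (Sr : Matrix (Fin d₁) (Fin d₁) ℝ)
    (Sc : Matrix (Fin d₂) (Fin d₂) ℝ) (X : Fin n → Matrix (Fin d₁) (Fin d₂) ℝ) (Y : Fin n → ℝ)
    (v : Fin d₂ → ℝ) (β : Fin n → ℝ) :
    dualObjU Sr Sc X Y v β =
      svmDual Sr (bilin v Sc v) (fun i => (X i - sampleMean X) *ᵥ v) Y β := by
  rw [dualObjU, svmDual, dualCombination_dotProduct_mulVec, Finset.sum_div, Finset.mul_sum]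
  congr 1
  refine Finset.sum_congr rfl fun i _ => ?_
  rw [Finset.sum_div, Finset.mul_sum]
  exact Finset.sum_congr rfl fun j _ => by ring

theorem stmt_11_general {n d₁ d₂ : ℕ}
    (Sr : Matrix (Fin d₁) (Fin d₁) ℝ) (Sc : Matrix (Fin d₂) (Fin d₂) ℝ)
    (hSr : Sr.PosDef) (hSc : Sc.PosDef)
    (X : Fin n → Matrix (Fin d₁) (Fin d₂) ℝ)
    (Ytil : Fin n → ℝ)
    (lam : ℝ) (hlam : 0 < lam)
    (v : Fin d₂ → ℝ) (hv : v ≠ 0)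
    (ustar : Fin d₁ → ℝ) (tstar : ℝ)
    (hmin : ∀ (u : Fin d₁ → ℝ) (t : ℝ),
      bilin ustar Sr ustar * bilin v Sc v
          + lam / n * ∑ i, max (1 - Ytil i * (bilin ustar (X i - sampleMean X) v - tstar)) 0
        ≤ bilin u Sr u * bilin v Sc v
          + lam / n * ∑ i, max (1 - Ytil i * (bilin u (X i - sampleMean X) v - t)) 0) :
    ∃ α : Fin n → ℝ,
      (∀ i, 0 ≤ α i ∧ α i ≤ lam / n) ∧
      (∑ i, α i * Ytil i = 0) ∧
      ustar = (2 * bilin v Sc v)⁻¹ •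
        ∑ i, (α i * Ytil i) • (Sr⁻¹.mulVec ((X i - sampleMean X).mulVec v)) ∧
      (∀ β : Fin n → ℝ, (∀ i, 0 ≤ β i ∧ β i ≤ lam / n) → (∑ i, β i * Ytil i = 0) →
        dualObjU Sr Sc X Ytil v α ≤ dualObjU Sr Sc X Ytil v β) := by
  set c := bilin v Sc v
  set A : Fin n → Fin d₁ → ℝ := fun i => (X i - sampleMean X) *ᵥ v
  have hc : 0 < c := by simpa [c, bilin_eq_dotProduct] using hSc.dotProduct_mulVec_pos hv
  have hκ : 0 ≤ lam / n := by positivity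
  have hopt : ∀ u t, svmPrimal Sr c (lam / n) A Ytil ustar tstar ≤
      svmPrimal Sr c (lam / n) A Ytil u t := fun u t => by
    simpa only [svmPrimal, bilin_eq_dotProduct, mul_comm c] using hmin u t
  obtain ⟨α, hα, hbal, hgrad⟩ :=
    exists_svm_kkt (isHermitian_iff_isSymm.1 hSr.isHermitian) hκ hopt
  have hunit : IsUnit Sr.det := (isUnit_iff_isUnit_det Sr).1 hSr.isUnit
  refine ⟨α, fun i => mem_Icc_of_mem_hingeSubdiff hκ (hα i), hbal, ?_, fun β hβ hβbal => ?_⟩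
  · rw [← mulVec_dualCombination, hgrad, mulVec_smul, mulVec_mulVec, nonsing_inv_mul _ hunit,
      one_mulVec, smul_smul, inv_mul_cancel₀ (by positivity), one_smul]
  · rw [dualObjU_eq_svmDual, dualObjU_eq_svmDual,
      svmDual_eq_neg_svmPrimal hunit hc.ne' hα hbal hgrad]
    exact neg_le.1 (neg_svmDual_le_svmPrimal hSr hc hβ hβbal ustar tstar)

/-- **Theorem 2, part 1 (dual characterization of the `u`-update).** If `(u*, t*)` minimizes
the PSMM objective in `(u, t)` for fixed `v ≠ 0`, then there is a dual-feasible `α` with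
`u* = (1/2) Σᵢ (αᵢỸᵢ) Σ_r⁻¹(Xᵢ−X̄)v / (vᵀΣ_c v)` minimizing the dual objective. -/
theorem stmt_11 {n d₁ d₂ : ℕ} (hn : 0 < n)
    (Sr : Matrix (Fin d₁) (Fin d₁) ℝ) (Sc : Matrix (Fin d₂) (Fin d₂) ℝ)
    (hSr : Sr.PosDef) (hSc : Sc.PosDef)
    (X : Fin n → Matrix (Fin d₁) (Fin d₂) ℝ)
    (Ytil : Fin n → ℝ) (hYtil : ∀ i, Ytil i = -1 ∨ Ytil i = 1)
    (lam : ℝ) (hlam : 0 < lam)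
    (v : Fin d₂ → ℝ) (hv : v ≠ 0)
    (ustar : Fin d₁ → ℝ) (tstar : ℝ)
    (hmin : ∀ (u : Fin d₁ → ℝ) (t : ℝ),
      bilin ustar Sr ustar * bilin v Sc v
          + lam / n * ∑ i, max (1 - Ytil i * (bilin ustar (X i - sampleMean X) v - tstar)) 0
        ≤ bilin u Sr u * bilin v Sc v
          + lam / n * ∑ i, max (1 - Ytil i * (bilin u (X i - sampleMean X) v - t)) 0) :
    ∃ α : Fin n → ℝ,
      (∀ i, 0 ≤ α i ∧ α i ≤ lam / n) ∧
      (∑ i, α i * Ytil i = 0) ∧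
      ustar = (2 * bilin v Sc v)⁻¹ •
        ∑ i, (α i * Ytil i) • (Sr⁻¹.mulVec ((X i - sampleMean X).mulVec v)) ∧
      (∀ β : Fin n → ℝ, (∀ i, 0 ≤ β i ∧ β i ≤ lam / n) → (∑ i, β i * Ytil i = 0) →
        dualObjU Sr Sc X Ytil v α ≤ dualObjU Sr Sc X Ytil v β) :=
  stmt_11_general Sr Sc hSr hSc X Ytil lam hlam v hv ustar tstar hmin
end
end

section
/- Let (Ω, F, P) be a probability space, K ≥ 1, and X : Ω → (Π_{k=1}^K Fin d_k) → ℝ a random order-K tensor with square-integrable entries and E[X] = 0. For vectors u_k ∈ ℝ^{d_k}, define the multilinear contraction ⟨X; u₁, …, u_K⟩ := Σ_{i₁, …, i_K} X(i₁, …, i_K)·Π_k u_k(i_k), and for matrices U_k ∈ Matrix (Fin d_k) (Fin r_k) ℝ define the reduced tensor W : Ω → (Π_k Fin r_k) → ℝ by W(j₁, …, j_K) := Σ_{i₁, …, i_K} X(i₁, …, i_K)·Π_k (U_k)_{i_k j_k}, with m := σ(W). Let Y : Ω → ℝ, Ỹ := 1{Y ∈ A₁} − 1{Y ∈ A₂}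 for disjoint measurable A₁, A₂, λ ≥ 0, and L(u₁, …, u_K, t) := Var(⟨X; u₁, …, u_K⟩) + λ·E[(1 − Ỹ(⟨X; u₁, …, u_K⟩ − t))₊]. Fix (u₁, …, u_K, t), assume Y and X are conditionally independent given m, and assume there exist η_k ∈ ℝ^{r_k}, k = 1, …, K, with E[⟨X; u₁, …, u_K⟩ | m] = ⟨X; U₁η₁, …, U_Kη_K⟩ almost surely. Then L(u₁, …, u_K, t) ≥ L(U₁η₁, …, U_Kη_K, t), with strict inequality if additionally E[(⟨X; u₁, …, u_K⟩ − E[⟨X; u₁, …, u_K⟩ | m])²] > 0. -/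
open MeasureTheory ProbabilityTheory

noncomputable section

/-- The multilinear contraction `⟨T; u₁, …, u_K⟩ = Σ_{i₁,…,i_K} T(i) ∏ₖ u_k(i_k)`,
i.e. `T ×₁ u₁ ×₂ ⋯ ×_K u_K`. -/
def tcontract {K : ℕ} {d : Fin K → ℕ} (T : ((k : Fin K) → Fin (d k)) → ℝ)
    (u : (k : Fin K) → Fin (d k) → ℝ) : ℝ :=
  ∑ i : (k : Fin K) → Fin (d k), T i * ∏ k, u k (i k)

/-- The reduced tensor `W = T ×₁ U₁ᵀ ×₂ ⋯ ×_K U_Kᵀ`, i.e.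
`W(j₁,…,j_K) = Σ_{i₁,…,i_K} T(i) ∏ₖ (U_k)_{i_k j_k}`. -/
def reduceTensor {K : ℕ} {d r : Fin K → ℕ} (T : ((k : Fin K) → Fin (d k)) → ℝ)
    (U : (k : Fin K) → Matrix (Fin (d k)) (Fin (r k)) ℝ) :
    ((k : Fin K) → Fin (r k)) → ℝ :=
  fun j => ∑ i : (k : Fin K) → Fin (d k), T i * ∏ k, U k (i k) (j k)

/-- The population PSTM objective
`L(u₁,…,u_K,t) = Var(⟨X; u₁,…,u_K⟩) + λ·E[(1 − Ỹ(⟨X; u₁,…,u_K⟩ − t))₊]`. -/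
def PSTMobj {Ω : Type*} [MeasurableSpace Ω] {K : ℕ} {d : Fin K → ℕ} (μ : Measure Ω)
    (X : Ω → ((k : Fin K) → Fin (d k)) → ℝ) (Ytil : Ω → ℝ) (lam : ℝ)
    (u : (k : Fin K) → Fin (d k) → ℝ) (t : ℝ) : ℝ :=
  variance (fun ω => tcontract (X ω) u) μ
    + lam * ∫ ω, max (1 - Ytil ω * (tcontract (X ω) u - t)) 0 ∂μ

/-! Write `f = ⟨X; u⟩` and `g = ⟨X; U₁η₁, …, U_Kη_K⟩`, so that `g = E[f | m]`. By the law of total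
variance, `Var f = Var g + E[(f - g)²]`. The hinge term is split according to the value
`1, -1, 0` of `Ỹ`, i.e. over the events `{Y ∈ A}` for `A = A₁, A₂, (A₁ ∪ A₂)ᶜ`. On each of them,
conditional Jensen gives `hinge(g) ≤ E[hinge(f) | m]` for the convex hinge, and conditional
independence allows replacing `1{Y ∈ A}` by `q = P(Y ∈ A | m)`:
`E[1{Y ∈ A} hinge(g)] = E[q hinge(g)] ≤ E[q hinge(f)] = E[1{Y ∈ A} hinge(f)]`.
Conditional independence is only available for bounded functions, so the last equality is
proved for the truncations `min(hinge(f), n)` and passed to the limit by dominated convergence. -/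

open Filter Topology

theorem norm_le_one_of_mem_Icc {x : ℝ} (hx : x ∈ Set.Icc (0 : ℝ) 1) : ‖x‖ ≤ 1 := by
  rw [Real.norm_eq_abs, abs_le]; exact ⟨by linarith [hx.1], hx.2⟩

section CondExp

variable {Ω : Type*} {m mΩ : MeasurableSpace Ω} {μ : Measure[mΩ] Ω} [IsFiniteMeasure μ]

theorem integral_mul_condExp (hm : m ≤ mΩ) {q f : Ω → ℝ} (hq : StronglyMeasurable[m] q)
    (hqf : Integrable (fun ω => q ω * f ω) μ) (hf : Integrable f μ) :
    ∫ ω, q ω * (μ[f|m]) ω ∂μ = ∫ ω, q ω * f ω ∂μ :=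
  (integral_congr_ae (condExp_mul_of_stronglyMeasurable_left hq hqf hf)).symm.trans
    (integral_condExp hm)

omit [IsFiniteMeasure μ] in
theorem variance_eq_variance_condExp_add [IsProbabilityMeasure μ] (hm : m ≤ mΩ) {f : Ω → ℝ}
    (hf : MemLp f 2 μ) :
    variance f μ = variance (μ[f|m]) μ + ∫ ω, (f ω - (μ[f|m]) ω) ^ 2 ∂μ := by
  rw [← integral_condVar_add_variance_condExp hm hf, add_comm]
  exact congrArg _ (integral_condExp hm (f := fun ω => (f ω - (μ[f|m]) ω) ^ 2))

theorem tendsto_integral_mul_min_natCast {w F : Ω → ℝ} (hw : AEStronglyMeasurable w μ)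
    (hw1 : ∀ᵐ ω ∂μ, ‖w ω‖ ≤ 1) (hF : Integrable F μ) :
    Tendsto (fun n : ℕ => ∫ ω, w ω * min (F ω) n ∂μ) atTop (𝓝 (∫ ω, w ω * F ω ∂μ)) := by
  refine tendsto_integral_of_dominated_convergence (fun ω => ‖F ω‖)
    (fun n => hw.mul (hF.inf (integrable_const _)).aestronglyMeasurable) hF.norm
    (fun n => ?_) (ae_of_all _ fun ω => ?_)
  · filter_upwards [hw1] with ω hω
    have hmin : ‖min (F ω) n‖ ≤ ‖F ω‖ := by
      simp only [Real.norm_eq_abs, abs_le]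
      constructor <;> cases min_cases (F ω) n <;> cases abs_cases (F ω) <;> linarith
    rw [norm_mul]
    simpa using mul_le_mul hω hmin (norm_nonneg _) zero_le_one
  · refine tendsto_const_nhds.mul (tendsto_atTop_of_eventually_const (i₀ := ⌈F ω⌉₊) ?_)
    exact fun n hn => min_eq_left (Nat.ceil_le.mp hn)

variable {e F : Ω → ℝ}

theorem ae_condExp_mem_Icc (hm : m ≤ mΩ) (he : AEStronglyMeasurable e μ)
    (he01 : ∀ ω, e ω ∈ Set.Icc (0 : ℝ) 1) : ∀ᵐ ω ∂μ, (μ[e|m]) ω ∈ Set.Icc (0 : ℝ) 1 :=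
  Convex.condExp_mem hm
    (Integrable.of_bound he 1 (ae_of_all _ fun ω => norm_le_one_of_mem_Icc (he01 ω)))
    isClosed_Icc (convex_Icc 0 1) (ae_of_all _ he01)

theorem integral_mul_eq_integral_condExp_mul (hm : m ≤ mΩ) (he : AEStronglyMeasurable e μ)
    (he01 : ∀ ω, e ω ∈ Set.Icc (0 : ℝ) 1) (hF : Integrable F μ)
    (hCI : ∀ n : ℕ, μ[fun ω => e ω * min (F ω) n|m]
      =ᵐ[μ] fun ω => (μ[e|m]) ω * (μ[fun ω => min (F ω) n|m]) ω) :
    ∫ ω, e ω * F ω ∂μ = ∫ ω, (μ[e|m]) ω * F ω ∂μ := by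
  have he1 : ∀ᵐ ω ∂μ, ‖e ω‖ ≤ 1 := ae_of_all _ fun ω => norm_le_one_of_mem_Icc (he01 ω)
  have hq1 : ∀ᵐ ω ∂μ, ‖(μ[e|m]) ω‖ ≤ 1 :=
    (ae_condExp_mem_Icc hm he he01).mono fun _ => norm_le_one_of_mem_Icc
  have hq : AEStronglyMeasurable (μ[e|m]) μ := integrable_condExp.aestronglyMeasurable
  have htrunc (n : ℕ) :
      ∫ ω, e ω * min (F ω) n ∂μ = ∫ ω, (μ[e|m]) ω * min (F ω) n ∂μ := by
    have hmin : Integrable (fun ω => min (F ω) n) μ := hF.inf (integrable_const _)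
    calc ∫ ω, e ω * min (F ω) n ∂μ
        = ∫ ω, (μ[fun ω => e ω * min (F ω) n|m]) ω ∂μ := (integral_condExp hm).symm
      _ = ∫ ω, (μ[e|m]) ω * (μ[fun ω => min (F ω) n|m]) ω ∂μ := integral_congr_ae (hCI n)
      _ = ∫ ω, (μ[e|m]) ω * min (F ω) n ∂μ :=
        integral_mul_condExp hm stronglyMeasurable_condExp (hmin.bdd_mul hq hq1) hmin
  refine tendsto_nhds_unique ?_ (tendsto_integral_mul_min_natCast hq hq1 hF)
  simpa only [htrunc] using tendsto_integral_mul_min_natCast he he1 hF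

theorem integral_mul_le_of_condIndep (hm : m ≤ mΩ) (he : AEStronglyMeasurable e μ)
    (he01 : ∀ ω, e ω ∈ Set.Icc (0 : ℝ) 1) (hF : Integrable F μ) {G : Ω → ℝ}
    (hG : StronglyMeasurable[m] G) (hGint : Integrable G μ) (hGF : G ≤ᵐ[μ] μ[F|m])
    (hCI : ∀ n : ℕ, μ[fun ω => e ω * min (F ω) n|m]
      =ᵐ[μ] fun ω => (μ[e|m]) ω * (μ[fun ω => min (F ω) n|m]) ω) :
    ∫ ω, e ω * G ω ∂μ ≤ ∫ ω, e ω * F ω ∂μ := by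
  have he1 : ∀ᵐ ω ∂μ, ‖e ω‖ ≤ 1 := ae_of_all _ fun ω => norm_le_one_of_mem_Icc (he01 ω)
  have hq01 := ae_condExp_mem_Icc hm he he01
  have hq1 : ∀ᵐ ω ∂μ, ‖(μ[e|m]) ω‖ ≤ 1 := hq01.mono fun ω => norm_le_one_of_mem_Icc
  have hq : AEStronglyMeasurable (μ[e|m]) μ := integrable_condExp.aestronglyMeasurable
  calc ∫ ω, e ω * G ω ∂μ = ∫ ω, G ω * (μ[e|m]) ω ∂μ := by
        simp_rw [integral_mul_condExp hm hG (hGint.mul_bdd he he1) (Integrable.of_bound he 1 he1),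
          mul_comm]
    _ ≤ ∫ ω, (μ[e|m]) ω * (μ[F|m]) ω ∂μ := by
        refine integral_mono_ae (hGint.mul_bdd hq hq1) (integrable_condExp.bdd_mul hq hq1) ?_
        filter_upwards [hq01, hGF] with ω hq hGF
        rw [mul_comm]
        exact mul_le_mul_of_nonneg_left hGF hq.1
    _ = ∫ ω, (μ[e|m]) ω * F ω ∂μ :=
        integral_mul_condExp hm stronglyMeasurable_condExp (hF.bdd_mul hq hq1) hF
    _ = ∫ ω, e ω * F ω ∂μ := (integral_mul_eq_integral_condExp_mul hm he he01 hF hCI).symm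

end CondExp

section Hinge

def hinge (c t x : ℝ) : ℝ := max (1 - c * (x - t)) 0

variable {c t : ℝ}

theorem hinge_nonneg (x : ℝ) : 0 ≤ hinge c t x := le_max_right _ _

theorem measurable_hinge : Measurable (hinge c t) := by
  unfold hinge; fun_prop

theorem convexOn_hinge : ConvexOn ℝ Set.univ (hinge c t) := by
  refine ⟨convex_univ, fun x _ y _ a b ha hb hab => ?_⟩
  simp only [hinge, smul_eq_mul]
  refine max_le ?_ (by positivity)
  calc 1 - c * (a * x + b * y - t) = a * (1 - c * (x - t)) + b * (1 - c * (y - t)) := by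
        linear_combination (-(1 + c * t)) * hab
    _ ≤ a * max (1 - c * (x - t)) 0 + b * max (1 - c * (y - t)) 0 := by
        gcongr <;> exact le_max_left _ _

theorem indicator_one_mem_Icc (A : Set ℝ) (y : ℝ) : A.indicator 1 y ∈ Set.Icc (0 : ℝ) 1 := by
  by_cases h : y ∈ A <;> simp [h]

theorem hinge_indicator_sub_indicator {A₁ A₂ : Set ℝ} (hdisj : Disjoint A₁ A₂) (y x : ℝ) :
    hinge (A₁.indicator 1 y - A₂.indicator 1 y) t x
      = A₁.indicator 1 y * hinge 1 t x + A₂.indicator 1 y * hinge (-1) t x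
        + (A₁ ∪ A₂)ᶜ.indicator 1 y * hinge 0 t x := by
  by_cases h₁ : y ∈ A₁
  · have h₂ : y ∉ A₂ := Set.disjoint_left.mp hdisj h₁
    simp [h₁, h₂]
  · by_cases h₂ : y ∈ A₂ <;> simp [h₁, h₂, hinge]

variable {Ω : Type*} {m mΩ : MeasurableSpace Ω} {μ : Measure[mΩ] Ω} [IsFiniteMeasure μ]

theorem MeasureTheory.Integrable.hinge_comp {f : Ω → ℝ} (hf : Integrable f μ) :
    Integrable (fun ω => hinge c t (f ω)) μ :=
  ((integrable_const 1).sub ((hf.sub (integrable_const t)).const_mul c)).sup (integrable_const 0)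

theorem hinge_condExp_le (hm : m ≤ mΩ) {f : Ω → ℝ} (hf : Integrable f μ) :
    (fun ω => hinge c t ((μ[f|m]) ω)) ≤ᵐ[μ] μ[fun ω => hinge c t (f ω)|m] :=
  convexOn_hinge.map_condExp_le_of_finiteDimensional hm hf hf.hinge_comp

omit [IsFiniteMeasure μ] in
theorem MeasureTheory.Integrable.indicator_one_comp_mul {Y : Ω → ℝ} (hY : Measurable Y)
    {A : Set ℝ} (hA : MeasurableSet A) {h : Ω → ℝ} (hh : Integrable h μ) :
    Integrable (fun ω => A.indicator 1 (Y ω) * h ω) μ :=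
  hh.bdd_mul ((measurable_one.indicator hA).comp hY).aestronglyMeasurable
    (ae_of_all _ fun ω => norm_le_one_of_mem_Icc (indicator_one_mem_Icc A (Y ω)))

theorem integral_hinge_sliceLabel_le {A₁ A₂ : Set ℝ} (hA₁ : MeasurableSet A₁)
    (hA₂ : MeasurableSet A₂) (hdisj : Disjoint A₁ A₂) {Y : Ω → ℝ} (hY : Measurable Y)
    {f g : Ω → ℝ} (hf : Integrable f μ) (hg : Integrable g μ)
    (hle : ∀ A, MeasurableSet A → ∀ c, ∫ ω, A.indicator 1 (Y ω) * hinge c t (g ω) ∂μ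
      ≤ ∫ ω, A.indicator 1 (Y ω) * hinge c t (f ω) ∂μ) :
    ∫ ω, hinge (sliceLabel A₁ A₂ Y ω) t (g ω) ∂μ
      ≤ ∫ ω, hinge (sliceLabel A₁ A₂ Y ω) t (f ω) ∂μ := by
  have hA₀ : MeasurableSet (A₁ ∪ A₂)ᶜ := (hA₁.union hA₂).compl
  have hsplit {h : Ω → ℝ} (hh : Integrable h μ) :
      ∫ ω, hinge (sliceLabel A₁ A₂ Y ω) t (h ω) ∂μ
        = ∫ ω, A₁.indicator 1 (Y ω) * hinge 1 t (h ω) ∂μ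
          + ∫ ω, A₂.indicator 1 (Y ω) * hinge (-1) t (h ω) ∂μ
          + ∫ ω, (A₁ ∪ A₂)ᶜ.indicator 1 (Y ω) * hinge 0 t (h ω) ∂μ := by
    have h₁ := (hh.hinge_comp (c := 1) (t := t)).indicator_one_comp_mul hY hA₁
    have h₂ := (hh.hinge_comp (c := -1) (t := t)).indicator_one_comp_mul hY hA₂
    simp_rw [sliceLabel, hinge_indicator_sub_indicator hdisj]
    rw [integral_add _ (hh.hinge_comp.indicator_one_comp_mul hY hA₀), integral_add h₁ h₂]
    exact h₁.add h₂
  rw [hsplit hf, hsplit hg]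
  gcongr ?_ + ?_ + ?_ <;> apply hle
  exacts [hA₁, hA₂, hA₀]

end Hinge

section Tensor

variable {K : ℕ} {d r : Fin K → ℕ}

theorem tcontract_mulVec_eq_tcontract_reduceTensor (T : ((k : Fin K) → Fin (d k)) → ℝ)
    (U : (k : Fin K) → Matrix (Fin (d k)) (Fin (r k)) ℝ) (η : (k : Fin K) → Fin (r k) → ℝ) :
    tcontract T (fun k => (U k).mulVec (η k)) = tcontract (reduceTensor T U) η := by
  simp only [tcontract, reduceTensor, Matrix.mulVec, dotProduct, Fintype.prod_sum,
    Finset.mul_sum, Finset.sum_mul]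
  rw [Finset.sum_comm]
  simp only [Finset.prod_mul_distrib, mul_assoc]

theorem measurable_tcontract (u : (k : Fin K) → Fin (d k) → ℝ) :
    Measurable fun T : ((k : Fin K) → Fin (d k)) → ℝ => tcontract T u := by
  unfold tcontract; fun_prop

theorem measurable_reduceTensor (U : (k : Fin K) → Matrix (Fin (d k)) (Fin (r k)) ℝ) :
    Measurable fun T : ((k : Fin K) → Fin (d k)) → ℝ => reduceTensor T U := by
  unfold reduceTensor; fun_prop

theorem memLp_tcontract {Ω : Type*} [MeasurableSpace Ω] {μ : Measure Ω}
    {X : Ω → ((k : Fin K) → Fin (d k)) → ℝ} (hX : ∀ i, MemLp (fun ω => X ω i) 2 μ)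
    (u : (k : Fin K) → Fin (d k) → ℝ) :
    MemLp (fun ω => tcontract (X ω) u) 2 μ := by
  unfold tcontract
  exact memLp_finsetSum Finset.univ fun i _ => (hX i).mul_const (∏ k, u k (i k))

end Tensor

theorem CondIndepBdd.condExp_indicator_mul_min {Ω α : Type*} {m mΩ : MeasurableSpace Ω}
    [MeasurableSpace α] {μ : Measure[mΩ] Ω} {Y : Ω → ℝ} {X : Ω → α}
    (hCI : CondIndepBdd μ m Y X) {A : Set ℝ} (hA : MeasurableSet A) {φ : α → ℝ}
    (hφ : Measurable φ) (hφ₀ : ∀ x, 0 ≤ φ x) (n : ℕ) :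
    μ[fun ω => A.indicator 1 (Y ω) * min (φ (X ω)) n|m]
      =ᵐ[μ] fun ω => (μ[fun ω => A.indicator 1 (Y ω)|m]) ω * (μ[fun ω => min (φ (X ω)) n|m]) ω :=
  hCI _ _ (measurable_one.indicator hA) (hφ.min measurable_const)
    ⟨1, fun y => norm_le_one_of_mem_Icc (indicator_one_mem_Icc A y)⟩
    ⟨n, fun x => abs_le.mpr ⟨by linarith [le_min (hφ₀ x) n.cast_nonneg], min_le_right _ _⟩⟩

theorem PSTMobj_eq_variance_add {Ω : Type*} [MeasurableSpace Ω] {K : ℕ} {d : Fin K → ℕ}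
    (μ : Measure Ω) (X : Ω → ((k : Fin K) → Fin (d k)) → ℝ) (Ytil : Ω → ℝ) (lam : ℝ)
    (u : (k : Fin K) → Fin (d k) → ℝ) (t : ℝ) :
    PSTMobj μ X Ytil lam u t = variance (fun ω => tcontract (X ω) u) μ
      + lam * ∫ ω, hinge (Ytil ω) t (tcontract (X ω) u) ∂μ :=
  rfl

theorem PSTMobj_le_of_condExp_eq {Ω : Type*} {m mΩ : MeasurableSpace Ω} {μ : Measure[mΩ] Ω}
    [IsProbabilityMeasure μ] (hm : m ≤ mΩ) {K : ℕ} {d : Fin K → ℕ}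
    {X : Ω → ((k : Fin K) → Fin (d k)) → ℝ} (hX : ∀ i, MemLp (fun ω => X ω i) 2 μ)
    {Y : Ω → ℝ} (hY : Measurable Y) {A₁ A₂ : Set ℝ} (hA₁ : MeasurableSet A₁)
    (hA₂ : MeasurableSet A₂) (hdisj : Disjoint A₁ A₂) {lam : ℝ} (hlam : 0 ≤ lam)
    {u v : (k : Fin K) → Fin (d k) → ℝ} {t : ℝ} (hCI : CondIndepBdd μ m Y X)
    (hv : StronglyMeasurable[m] fun ω => tcontract (X ω) v)
    (hcond : μ[fun ω => tcontract (X ω) u|m] =ᵐ[μ] fun ω => tcontract (X ω) v) :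
    PSTMobj μ X (sliceLabel A₁ A₂ Y) lam v t ≤ PSTMobj μ X (sliceLabel A₁ A₂ Y) lam u t ∧
    (0 < ∫ ω, (tcontract (X ω) u - (μ[fun ω => tcontract (X ω) u|m]) ω) ^ 2 ∂μ →
      PSTMobj μ X (sliceLabel A₁ A₂ Y) lam v t < PSTMobj μ X (sliceLabel A₁ A₂ Y) lam u t) := by
  rw [PSTMobj_eq_variance_add, PSTMobj_eq_variance_add]
  set f := fun ω => tcontract (X ω) u
  set g := fun ω => tcontract (X ω) v
  have hf : MemLp f 2 μ := memLp_tcontract hX u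
  have hg : Integrable g μ := (memLp_tcontract hX v).integrable one_le_two
  have hvar : variance f μ = variance g μ + ∫ ω, (f ω - (μ[f|m]) ω) ^ 2 ∂μ := by
    rw [variance_eq_variance_condExp_add hm hf, variance_congr hcond]
  have hhinge : ∫ ω, hinge (sliceLabel A₁ A₂ Y ω) t (g ω) ∂μ
      ≤ ∫ ω, hinge (sliceLabel A₁ A₂ Y ω) t (f ω) ∂μ := by
    refine integral_hinge_sliceLabel_le hA₁ hA₂ hdisj hY (hf.integrable one_le_two) hg
      fun A hA c => ?_
    refine integral_mul_le_of_condIndep hm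
      ((measurable_one.indicator hA).comp hY).aestronglyMeasurable
      (fun ω => indicator_one_mem_Icc A (Y ω)) (hf.integrable one_le_two).hinge_comp
      (measurable_hinge.comp hv.measurable).stronglyMeasurable hg.hinge_comp ?_
      (hCI.condExp_indicator_mul_min hA (measurable_hinge.comp (measurable_tcontract u))
        (fun _ => hinge_nonneg _))
    filter_upwards [hcond, hinge_condExp_le hm (hf.integrable one_le_two)] with ω hfg hle
    rwa [← hfg]
  have hlam_hinge := mul_le_mul_of_nonneg_left hhinge hlam
  have hsq : 0 ≤ ∫ ω, (f ω - (μ[f|m]) ω) ^ 2 ∂μ := integral_nonneg fun ω => sq_nonneg _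
  exact ⟨by linarith, fun hpos => by linarith⟩

theorem stmt_14_general {Ω : Type*} [MeasurableSpace Ω] {μ : Measure Ω} [IsProbabilityMeasure μ]
    {K : ℕ} {d r : Fin K → ℕ}
    (X : Ω → ((k : Fin K) → Fin (d k)) → ℝ) (hX : Measurable X)
    (hXL2 : ∀ i, MemLp (fun ω => X ω i) 2 μ)
    (Y : Ω → ℝ) (hY : Measurable Y)
    (A₁ A₂ : Set ℝ) (hA₁ : MeasurableSet A₁) (hA₂ : MeasurableSet A₂)
    (hdisj : Disjoint A₁ A₂)
    (lam : ℝ) (hlam : 0 ≤ lam)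
    (U : (k : Fin K) → Matrix (Fin (d k)) (Fin (r k)) ℝ)
    (u : (k : Fin K) → Fin (d k) → ℝ) (t : ℝ)
    (η : (k : Fin K) → Fin (r k) → ℝ)
    (hCI : CondIndepBdd μ
      (MeasurableSpace.comap (fun ω => reduceTensor (X ω) U) inferInstance) Y X)
    (hmultilin : μ[fun ω => tcontract (X ω) u |
        MeasurableSpace.comap (fun ω => reduceTensor (X ω) U) inferInstance]
      =ᵐ[μ] fun ω => tcontract (X ω) (fun k => (U k).mulVec (η k))) :
    PSTMobj μ X (sliceLabel A₁ A₂ Y) lam (fun k => (U k).mulVec (η k)) t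
      ≤ PSTMobj μ X (sliceLabel A₁ A₂ Y) lam u t ∧
    (0 < ∫ ω, (tcontract (X ω) u
        - (μ[fun ω' => tcontract (X ω') u |
            MeasurableSpace.comap (fun ω' => reduceTensor (X ω') U) inferInstance]) ω) ^ 2 ∂μ →
      PSTMobj μ X (sliceLabel A₁ A₂ Y) lam (fun k => (U k).mulVec (η k)) t
        < PSTMobj μ X (sliceLabel A₁ A₂ Y) lam u t) := by
  refine PSTMobj_le_of_condExp_eq ((measurable_reduceTensor U).comp hX).comap_le hXL2 hY
    hA₁ hA₂ hdisj hlam hCI ?_ hmultilin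
  simp only [tcontract_mulVec_eq_tcontract_reduceTensor]
  exact ((measurable_tcontract η).comp (comap_measurable _)).stronglyMeasurable

/-- **Key inequality in the proof of Theorem 3 (PSTM).** If `Y ⫫ X | σ(W)` with
`W = X ×₁ U₁ᵀ ⋯ ×_K U_Kᵀ` and `E[⟨X; u₁,…,u_K⟩ | σ(W)] = ⟨X; U₁η₁,…,U_Kη_K⟩` a.s., then
`L(u₁,…,u_K,t) ≥ L(U₁η₁,…,U_Kη_K,t)`, strictly if moreover
`E[(⟨X; u₁,…,u_K⟩ − E[⟨X; u₁,…,u_K⟩ | σ(W)])²] > 0`. -/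
theorem stmt_14 {Ω : Type*} [MeasurableSpace Ω] {μ : Measure Ω} [IsProbabilityMeasure μ]
    {K : ℕ} (hK : 1 ≤ K) {d r : Fin K → ℕ}
    (X : Ω → ((k : Fin K) → Fin (d k)) → ℝ) (hX : Measurable X)
    (hXL2 : ∀ i, MemLp (fun ω => X ω i) 2 μ)
    (hXmean : ∀ i, ∫ ω, X ω i ∂μ = 0)
    (Y : Ω → ℝ) (hY : Measurable Y)
    (A₁ A₂ : Set ℝ) (hA₁ : MeasurableSet A₁) (hA₂ : MeasurableSet A₂)
    (hdisj : Disjoint A₁ A₂)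
    (lam : ℝ) (hlam : 0 ≤ lam)
    (U : (k : Fin K) → Matrix (Fin (d k)) (Fin (r k)) ℝ)
    (u : (k : Fin K) → Fin (d k) → ℝ) (t : ℝ)
    (η : (k : Fin K) → Fin (r k) → ℝ)
    (hCI : CondIndepBdd μ
      (MeasurableSpace.comap (fun ω => reduceTensor (X ω) U) inferInstance) Y X)
    (hmultilin : μ[fun ω => tcontract (X ω) u |
        MeasurableSpace.comap (fun ω => reduceTensor (X ω) U) inferInstance]
      =ᵐ[μ] fun ω => tcontract (X ω) (fun k => (U k).mulVec (η k))) :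
    PSTMobj μ X (sliceLabel A₁ A₂ Y) lam (fun k => (U k).mulVec (η k)) t
      ≤ PSTMobj μ X (sliceLabel A₁ A₂ Y) lam u t ∧
    (0 < ∫ ω, (tcontract (X ω) u
        - (μ[fun ω' => tcontract (X ω') u |
            MeasurableSpace.comap (fun ω' => reduceTensor (X ω') U) inferInstance]) ω) ^ 2 ∂μ →
      PSTMobj μ X (sliceLabel A₁ A₂ Y) lam (fun k => (U k).mulVec (η k)) t
        < PSTMobj μ X (sliceLabel A₁ A₂ Y) lam u t) :=
  stmt_14_general X hX hXL2 Y hY A₁ A₂ hA₁ hA₂ hdisj lam hlam U u t η hCI hmultilin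
end
end
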